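/- For every integer n ≥ 1 and every x ∈ [0,1], the second moment of the Stancu-type operator Lₙ = 𝔅̄ₙ ∘ Bₙ satisfies (𝔅̄ₙ ∘ Bₙ)((e₁ − x·e₀)²; x) = 2x(1−x)/(n+1); that is, if g(u) = Σ_{k=0}^n (k/n − x)²·C(n,k)·u^k(1−u)^{n−k}, then 𝔅̄ₙg(x) = 2x(1−x)/(n+1). -/

import Mathlib

open MeasureTheory Finset

/-- The Beta operator of Mühlbach and Lupaş on `C[0,1]`. -/
noncomputable def betaOp (n : ℕ) (f : ℝ → ℝ) (x : ℝ) : ℝ :=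
  if x = 0 then f 0
  else if x = 1 then f 1
  else (∫ t in (0:ℝ)..1, t ^ ((n:ℝ) * x - 1) * (1 - t) ^ ((n:ℝ) * (1 - x) - 1) * f t) /
       (∫ t in (0:ℝ)..1, t ^ ((n:ℝ) * x - 1) * (1 - t) ^ ((n:ℝ) * (1 - x) - 1))

/-- The Bernstein operator. -/
noncomputable def bernsteinOp (n : ℕ) (f : ℝ → ℝ) (x : ℝ) : ℝ :=
  ∑ k ∈ Finset.range (n + 1), f ((k : ℝ) / n) * (n.choose k) * x ^ k * (1 - x) ^ (n - k)

/-!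
Bernstein operators map `(t - x)²` to the quadratic `(u - x)² + u(1 - u)/n`, by the classical
variance identity for Bernstein polynomials. The Beta operator `𝔅̄ₙ` at an interior point `x`
is integration against the Beta density with parameters `a = nx`, `b = n(1 - x)`, whose first two
moments `a/(a+b)` and `a(a+1)/((a+b)(a+b+1))` follow from `Γ(s+1) = sΓ(s)`.
Hence `𝔅̄ₙ e₁ = x` and `𝔅̄ₙ e₂ = x(nx+1)/(n+1)` on all of `[0,1]`, and the claim is
arithmetic.
-/

open ProbabilityTheory

open Polynomial in
theorem bernsteinOp_sq_sub {n : ℕ} (hn : n ≠ 0) (x u : ℝ) :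
    bernsteinOp n (fun t => (t - x) ^ 2) u = (u - x) ^ 2 + u * (1 - u) / n := by
  set b : ℕ → ℝ := fun k => (bernsteinPolynomial ℝ n k).eval u
  have hb : ∀ k, (n.choose k : ℝ) * u ^ k * (1 - u) ^ (n - k) = b k := by
    intro k; simp [b, bernsteinPolynomial, mul_assoc]
  have sum_b : ∑ k ∈ range (n + 1), b k = 1 := by
    simpa [eval_finsetSum] using congrArg (eval u) (bernsteinPolynomial.sum ℝ n)
  have sum_mul_b : ∑ k ∈ range (n + 1), k * b k = n * u := by
    simpa [eval_finsetSum] using congrArg (eval u) (bernsteinPolynomial.sum_smul ℝ n)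
  have variance : ∑ k ∈ range (n + 1), (n * u - k) ^ 2 * b k = n * u * (1 - u) := by
    simpa [eval_finsetSum] using congrArg (eval u) (bernsteinPolynomial.variance ℝ n)
  have hn' : (n : ℝ) ≠ 0 := Nat.cast_ne_zero.2 hn
  calc bernsteinOp n (fun t => (t - x) ^ 2) u
      = ∑ k ∈ range (n + 1), ((u - x) ^ 2 * b k + 2 * (u - x) / n * (k * b k - n * u * b k)
          + (n * u - k) ^ 2 * b k / n ^ 2) := by
        refine sum_congr rfl fun k _ => ?_
        rw [mul_assoc _ _ (u ^ k), mul_assoc, hb]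
        field_simp
        ring
    _ = (u - x) ^ 2 + u * (1 - u) / n := by
        rw [sum_add_distrib, sum_add_distrib, ← mul_sum, ← mul_sum, ← sum_div,
          sum_sub_distrib, ← mul_sum, sum_b, sum_mul_b, variance]
        field_simp
        ring

theorem ofReal_rpow_mul_one_sub_rpow {t : ℝ} (ht : t ∈ Set.Icc (0:ℝ) 1) (a b : ℝ) :
    ((t ^ (a - 1) * (1 - t) ^ (b - 1) : ℝ) : ℂ) =
      (t : ℂ) ^ ((a : ℂ) - 1) * (1 - (t : ℂ)) ^ ((b : ℂ) - 1) := by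
  rw [Complex.ofReal_mul, Complex.ofReal_cpow ht.1, Complex.ofReal_cpow (sub_nonneg.2 ht.2)]
  push_cast
  rfl

theorem intervalIntegrable_rpow_mul_one_sub_rpow {a b : ℝ} (ha : 0 < a) (hb : 0 < b) :
    IntervalIntegrable (fun t : ℝ => t ^ (a - 1) * (1 - t) ^ (b - 1)) volume 0 1 := by
  have h := Complex.betaIntegral_convergent (u := a) (v := b) (by simpa) (by simpa)
  rw [intervalIntegrable_iff_integrableOn_Ioc_of_le zero_le_one] at h ⊢
  refine IntegrableOn.congr_fun h.re (fun t ht => ?_) measurableSet_Ioc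
  simp only [← ofReal_rpow_mul_one_sub_rpow (Set.Ioc_subset_Icc_self ht), RCLike.re_to_complex,
    Complex.ofReal_re]

theorem integral_rpow_mul_one_sub_rpow {a b : ℝ} (ha : 0 < a) (hb : 0 < b) :
    ∫ t in (0:ℝ)..1, t ^ (a - 1) * (1 - t) ^ (b - 1) = beta a b := by
  have h : ((∫ t in (0:ℝ)..1, t ^ (a - 1) * (1 - t) ^ (b - 1) : ℝ) : ℂ) =
      Complex.betaIntegral a b := by
    rw [Complex.betaIntegral, ← intervalIntegral.integral_ofReal]
    refine intervalIntegral.integral_congr fun t ht => ?_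
    rw [Set.uIcc_of_le zero_le_one] at ht
    exact ofReal_rpow_mul_one_sub_rpow ht a b
  rw [beta_eq_betaIntegralReal a b ha hb, ← h, Complex.ofReal_re]

theorem ProbabilityTheory.beta_add_one_left {a : ℝ} (b : ℝ) (ha : a ≠ 0) (hab : a + b ≠ 0) :
    beta (a + 1) b = a / (a + b) * beta a b := by
  rw [beta, beta, Real.Gamma_add_one ha, add_right_comm, Real.Gamma_add_one hab,
    div_mul_div_comm, mul_assoc a]

theorem integral_rpow_mul_one_sub_rpow_mul_pow {a b : ℝ} (ha : 0 < a) (hb : 0 < b) (k : ℕ) :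
    ∫ t in (0:ℝ)..1, t ^ (a - 1) * (1 - t) ^ (b - 1) * t ^ k = beta (a + k) b := by
  rw [← integral_rpow_mul_one_sub_rpow (by positivity) hb]
  refine intervalIntegral.integral_congr fun t ht => ?_
  rw [Set.uIcc_of_le zero_le_one] at ht
  rcases k.eq_zero_or_pos with rfl | hk
  · simp
  have hk' : (1 : ℝ) ≤ k := by exact_mod_cast hk
  rw [add_sub_right_comm, Real.rpow_add_natCast' ht.1 (by linarith), mul_right_comm]

theorem integral_rpow_mul_one_sub_rpow_mul_quadratic {a b : ℝ} (ha : 0 < a) (hb : 0 < b)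
    (c₀ c₁ c₂ : ℝ) :
    ∫ t in (0:ℝ)..1, t ^ (a - 1) * (1 - t) ^ (b - 1) * (c₂ * t ^ 2 + c₁ * t + c₀) =
      (c₂ * (a * (a + 1)) / ((a + b) * (a + b + 1)) + c₁ * a / (a + b) + c₀) * beta a b := by
  have moment (k : ℕ) : IntervalIntegrable
      (fun t : ℝ => t ^ (a - 1) * (1 - t) ^ (b - 1) * t ^ k) volume 0 1 :=
    (intervalIntegrable_rpow_mul_one_sub_rpow ha hb).mul_continuousOn
      (continuous_pow k).continuousOn
  have split (t : ℝ) : t ^ (a - 1) * (1 - t) ^ (b - 1) * (c₂ * t ^ 2 + c₁ * t + c₀) =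
      c₂ * (t ^ (a - 1) * (1 - t) ^ (b - 1) * t ^ 2)
        + c₁ * (t ^ (a - 1) * (1 - t) ^ (b - 1) * t ^ 1)
        + c₀ * (t ^ (a - 1) * (1 - t) ^ (b - 1) * t ^ 0) := by
    ring
  simp_rw [split]
  rw [intervalIntegral.integral_add (((moment 2).const_mul _).add ((moment 1).const_mul _))
      ((moment 0).const_mul _),
    intervalIntegral.integral_add ((moment 2).const_mul _) ((moment 1).const_mul _)]
  simp only [intervalIntegral.integral_const_mul, integral_rpow_mul_one_sub_rpow_mul_pow ha hb]
  push_cast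
  rw [show a + 2 = a + 1 + 1 by ring, beta_add_one_left b (by positivity) (by positivity),
    beta_add_one_left b ha.ne' (by positivity), add_zero]
  field_simp
  ring

theorem betaOp_quadratic {n : ℕ} (hn : n ≠ 0) (c₀ c₁ c₂ : ℝ) {x : ℝ}
    (hx : x ∈ Set.Icc (0:ℝ) 1) :
    betaOp n (fun t => c₂ * t ^ 2 + c₁ * t + c₀) x =
      c₂ * x * (n * x + 1) / (n + 1) + c₁ * x + c₀ := by
  obtain ⟨hx0, hx1⟩ := hx
  rcases hx0.eq_or_lt with rfl | hx0
  · simp [betaOp]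
  rcases hx1.eq_or_lt with rfl | hx1
  · simp [betaOp]
    field_simp
  have hn' : (0 : ℝ) < n := by positivity
  have ha : 0 < (n : ℝ) * x := by positivity
  have hb : 0 < (n : ℝ) * (1 - x) := mul_pos hn' (by linarith)
  rw [betaOp, if_neg hx0.ne', if_neg hx1.ne, integral_rpow_mul_one_sub_rpow_mul_quadratic ha hb,
    integral_rpow_mul_one_sub_rpow ha hb, mul_div_cancel_right₀ _ (beta_pos ha hb).ne',
    show (n : ℝ) * x + n * (1 - x) = n by ring]
  field_simp

/-- The second moment of the Stancu-type operator `Lₙ = 𝔅̄ₙ ∘ Bₙ` equals `2x(1-x)/(n+1)`. -/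
theorem stancu_second_moment (n : ℕ) (hn : 1 ≤ n) (x : ℝ) (hx : x ∈ Set.Icc (0:ℝ) 1) :
    betaOp n (bernsteinOp n (fun t => (t - x) ^ 2)) x = 2 * x * (1 - x) / ((n : ℝ) + 1) := by
  have hn0 : n ≠ 0 := by omega
  have bernstein_quadratic : bernsteinOp n (fun t => (t - x) ^ 2) =
      fun u => (1 - 1 / n) * u ^ 2 + (1 / n - 2 * x) * u + x ^ 2 := by
    funext u
    rw [bernsteinOp_sq_sub hn0]
    ring
  rw [bernstein_quadratic, betaOp_quadratic hn0 _ _ _ hx]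
  field_simp
  ring
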